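/- Let n, i, j be integers with i ≥ j ≥ 0, i + j ≤ n and i + j ≡ n (mod 2), and let δ_i be the remainder of i modulo 2. Then the number of pairs (P,Q) of lattice paths of length n satisfying Q ≤ P, h(P) = j + δ_i, h(Q) = −j + δ_i, and min over 0 ≤ a ≤ n of (h_a(P) + h_a(Q))/2 equal to −⌊i/2⌋, equals the number of walks of length n constrained to the upper half-plane (all positions satisfy y ≥ 0) that end at the point (δ_i, j) and whose minimum x-coordinate over all positions equals −⌊i/2⌋. -/

import Mathlib

/-- A lattice path of length `n`: each step is `+1` (U) or `-1` (D). -/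
def IsPath {n : ℕ} (P : Fin n → ℤ) : Prop := ∀ l, P l = 1 ∨ P l = -1

/-- Height of the path `P` at `x = a`: sum of the first `a` steps. -/
def ht {n : ℕ} (P : Fin n → ℤ) (a : ℕ) : ℤ :=
  ∑ l ∈ Finset.univ.filter (fun l : Fin n => (l : ℕ) < a), P l

/-- The lowest height of the agreement path `(P+Q)/2`, over `0 ≤ a ≤ n`. -/
def agreeMin {n : ℕ} (P Q : Fin n → ℤ) : ℤ :=
  (Finset.range (n + 1)).inf' Finset.nonempty_range_add_one
    (fun a => (ht P a + ht Q a) / 2)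

/-- A walk of length `n` with unit steps N, S, E, W. -/
def IsWalk {n : ℕ} (w : Fin n → ℤ × ℤ) : Prop :=
  ∀ l, w l = (0, 1) ∨ w l = (0, -1) ∨ w l = (1, 0) ∨ w l = (-1, 0)

/-- Position of the walk `w` after `a` steps. -/
def pos {n : ℕ} (w : Fin n → ℤ × ℤ) (a : ℕ) : ℤ × ℤ :=
  ∑ l ∈ Finset.univ.filter (fun l : Fin n => (l : ℕ) < a), w l

/-- The minimum x-coordinate of a walk over `0 ≤ a ≤ n`. -/
def minX {n : ℕ} (w : Fin n → ℤ × ℤ) : ℤ :=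
  (Finset.range (n + 1)).inf' Finset.nonempty_range_add_one (fun a => (pos w a).1)

/-!
Read a step `(x, y)` of a walk as the pair of path steps `(x + y, x - y)`: this rotation by 45°
maps the steps N, S, E, W bijectively onto the four pairs of steps `(±1, ±1)`. Heights then add
up, `h_a(P) = x_a + y_a` and `h_a(Q) = x_a - y_a` for the position `(x_a, y_a)` of the walk after
`a` steps, so `Q ≤ P` says that the walk stays in the upper half-plane, the two end heights fix
its end point, and the agreement path `(P + Q)/2` is the x-coordinate of the walk.
-/

lemma Nat.card_subtype_comp_of_injective {α β : Type*} {f : α → β} (hf : Function.Injective f)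
    {p : β → Prop} (hp : ∀ b, p b → b ∈ Set.range f) :
    Nat.card {a // p (f a)} = Nat.card {b // p b} := by
  refine Nat.card_congr (Equiv.ofBijective (fun a => ⟨f a.1, a.2⟩) ⟨?_, ?_⟩)
  · exact fun a b h => Subtype.ext (hf (congrArg Subtype.val h))
  · rintro ⟨b, hb⟩
    obtain ⟨a, rfl⟩ := hp b hb
    exact ⟨⟨a, hb⟩, rfl⟩

section Rotation

variable {n : ℕ}

lemma ht_add (P Q : Fin n → ℤ) (a : ℕ) : ht (P + Q) a = ht P a + ht Q a :=
  Finset.sum_add_distrib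

lemma ht_sub (P Q : Fin n → ℤ) (a : ℕ) : ht (P - Q) a = ht P a - ht Q a :=
  Finset.sum_sub_distrib ..

lemma pos_fst (w : Fin n → ℤ × ℤ) (a : ℕ) : (pos w a).1 = ht (fun l => (w l).1) a :=
  Prod.fst_sum ..

lemma pos_snd (w : Fin n → ℤ × ℤ) (a : ℕ) : (pos w a).2 = ht (fun l => (w l).2) a :=
  Prod.snd_sum ..

def toPaths (w : Fin n → ℤ × ℤ) : (Fin n → ℤ) × (Fin n → ℤ) :=
  (fun l => (w l).1 + (w l).2, fun l => (w l).1 - (w l).2)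

lemma ht_toPaths_fst (w : Fin n → ℤ × ℤ) (a : ℕ) :
    ht (toPaths w).1 a = (pos w a).1 + (pos w a).2 := by
  rw [pos_fst, pos_snd, ← ht_add]
  rfl

lemma ht_toPaths_snd (w : Fin n → ℤ × ℤ) (a : ℕ) :
    ht (toPaths w).2 a = (pos w a).1 - (pos w a).2 := by
  rw [pos_fst, pos_snd, ← ht_sub]
  rfl

lemma toPaths_injective : Function.Injective (toPaths (n := n)) := by
  intro w v h
  funext l
  have h₁ := congrFun (congrArg Prod.fst h) l
  have h₂ := congrFun (congrArg Prod.snd h) l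
  simp only [toPaths] at h₁ h₂
  ext <;> omega

lemma isPath_toPaths_iff (w : Fin n → ℤ × ℤ) :
    IsPath (toPaths w).1 ∧ IsPath (toPaths w).2 ↔ IsWalk w := by
  simp only [IsPath, IsWalk, toPaths, ← forall_and, Prod.ext_iff]
  refine forall_congr' fun l => ?_
  omega

lemma mem_range_toPaths {P Q : Fin n → ℤ} (hP : IsPath P) (hQ : IsPath Q) :
    (P, Q) ∈ Set.range toPaths := by
  refine ⟨fun l => ((P l + Q l) / 2, (P l - Q l) / 2), ?_⟩
  ext l <;> rcases hP l with h | h <;> rcases hQ l with h' | h' <;> simp [toPaths, h, h']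

lemma agreeMin_toPaths (w : Fin n → ℤ × ℤ) :
    agreeMin (toPaths w).1 (toPaths w).2 = minX w := by
  refine Finset.inf'_congr _ rfl fun a _ => ?_
  rw [ht_toPaths_fst, ht_toPaths_snd]
  omega

end Rotation

theorem stmt9_general (n : ℕ) (i j : ℤ) :
    Nat.card {PQ : (Fin n → ℤ) × (Fin n → ℤ) //
      IsPath PQ.1 ∧ IsPath PQ.2 ∧
      (∀ a ≤ n, ht PQ.2 a ≤ ht PQ.1 a) ∧
      ht PQ.1 n = j + i % 2 ∧ ht PQ.2 n = -j + i % 2 ∧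
      agreeMin PQ.1 PQ.2 = -(i / 2)} =
    Nat.card {w : Fin n → ℤ × ℤ //
      IsWalk w ∧ (∀ a ≤ n, 0 ≤ (pos w a).2) ∧ pos w n = (i % 2, j) ∧ minX w = -(i / 2)} := by
  rw [← Nat.card_subtype_comp_of_injective toPaths_injective
    fun PQ h => mem_range_toPaths h.1 h.2.1]
  refine Nat.card_congr (Equiv.subtypeEquivRight fun w => ?_)
  simp only [← isPath_toPaths_iff w, ht_toPaths_fst, ht_toPaths_snd, agreeMin_toPaths,
    Prod.ext_iff, and_assoc]
  refine and_congr_right' (and_congr_right' (and_congr (forall₂_congr fun a _ => ?_) ?_))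
  · omega
  · rw [← and_assoc, ← and_assoc]
    exact and_congr_left' (by omega)

theorem stmt9 (n : ℕ) (i j : ℤ) (hj : 0 ≤ j) (hij : j ≤ i) (hn : i + j ≤ (n : ℤ))
    (hpar : (i + j) % 2 = (n : ℤ) % 2) :
    Nat.card {PQ : (Fin n → ℤ) × (Fin n → ℤ) //
      IsPath PQ.1 ∧ IsPath PQ.2 ∧
      (∀ a ≤ n, ht PQ.2 a ≤ ht PQ.1 a) ∧
      ht PQ.1 n = j + i % 2 ∧ ht PQ.2 n = -j + i % 2 ∧
      agreeMin PQ.1 PQ.2 = -(i / 2)} =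
    Nat.card {w : Fin n → ℤ × ℤ //
      IsWalk w ∧ (∀ a ≤ n, 0 ≤ (pos w a).2) ∧ pos w n = (i % 2, j) ∧ minX w = -(i / 2)} :=
  stmt9_general n i j
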